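/- arXiv:2105.12042 — 2 statements merged into one kernel-verified Lean document; each statement's English description precedes it below -/
import Mathlib

section
/- A finite quiver Q has a source cycle if and only if its Kronecker square Q̂ has a source cycle; similarly Q has a sink cycle if and only if Q̂ has a sink cycle. -/
structure Quiv where
  V : Type
  A : Type
  s : A → V
  t : A → V

namespace Quiv

/-- The Kronecker square of a quiver. -/
def kron (Q : Quiv) : Quiv where
  V := Q.V × Q.V
  A := Q.A × Q.A
  s := fun p => (Q.s p.1, Q.s p.2)
  t := fun p => (Q.t p.1, Q.t p.2)

instance toQuiver (Q : Quiv) : Quiver Q.V :=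
  ⟨fun i j => {a : Q.A // Q.s a = i ∧ Q.t a = j}⟩

/-- Paths of length `k` from `i` to `j`. -/
def PathN (Q : Quiv) (i j : Q.V) (k : ℕ) : Type :=
  {p : Quiver.Path i j // p.length = k}

end Quiv

namespace Quiv

variable {Q : Quiv}

/-- The list of arrows traversed by a path. -/
def arrowsOf : ∀ {i j : Q.V}, Quiver.Path i j → List Q.A
  | _, _, Quiver.Path.nil => []
  | _, _, Quiver.Path.cons p a => arrowsOf p ++ [a.1]

/-- The list of vertices visited by a path. -/
def vertsOf : ∀ {i j : Q.V}, Quiver.Path i j → List Q.V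
  | i, _, Quiver.Path.nil => [i]
  | _, _, Quiver.Path.cons p a => vertsOf p ++ [Q.t a.1]

/-- An (oriented) cycle of a quiver: a nontrivial path from a vertex to itself. -/
def Cycle (Q : Quiv) : Type :=
  Σ x : Q.V, {c : Quiver.Path x x // 0 < c.length}

/-- The arrows of a cycle, as a set. -/
def Cycle.arrowSet (c : Q.Cycle) : Set Q.A := {a | a ∈ arrowsOf c.2.1}

/-- The vertices of a cycle, as a set. -/
def Cycle.vertSet (c : Q.Cycle) : Set Q.V := {v | v ∈ vertsOf c.2.1}

end Quiv

/-- `Q` has a source cycle: a cycle together with an arrow `p` not in the cycle whose source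
coincides with the source of some arrow of the cycle. -/
def Quiv.HasSourceCycle (Q : Quiv) : Prop :=
  ∃ (c : Q.Cycle) (p : Q.A), p ∉ Quiv.arrowsOf c.2.1 ∧
    ∃ a ∈ Quiv.arrowsOf c.2.1, Q.s p = Q.s a

/-- `Q` has a sink cycle: a cycle together with an arrow `p` not in the cycle whose target
coincides with the target of some arrow of the cycle. -/
def Quiv.HasSinkCycle (Q : Quiv) : Prop :=
  ∃ (c : Q.Cycle) (p : Q.A), p ∉ Quiv.arrowsOf c.2.1 ∧
    ∃ a ∈ Quiv.arrowsOf c.2.1, Q.t p = Q.t a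

namespace Quiv

variable {Q : Quiv}

/-- `l` is the list of arrows of a walk from `i` to `j`. -/
def IsWalk (Q : Quiv) : Q.V → Q.V → List Q.A → Prop
  | i, j, [] => i = j
  | i, j, a :: l => Q.s a = i ∧ IsWalk Q (Q.t a) j l

lemma isWalk_append {i j k : Q.V} {l1 l2 : List Q.A} (h1 : IsWalk Q i j l1)
    (h2 : IsWalk Q j k l2) : IsWalk Q i k (l1 ++ l2) := by
  induction l1 generalizing i with
  | nil => have : i = j := h1; subst this; exact h2
  | cons a t ih => exact ⟨h1.1, ih h1.2⟩

lemma isWalk_split {i k : Q.V} {l1 l2 : List Q.A} (h : IsWalk Q i k (l1 ++ l2)) :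
    ∃ j, IsWalk Q i j l1 ∧ IsWalk Q j k l2 := by
  induction l1 generalizing i with
  | nil => exact ⟨i, rfl, h⟩
  | cons a t ih =>
      obtain ⟨j, hj1, hj2⟩ := ih h.2
      exact ⟨j, ⟨h.1, hj1⟩, hj2⟩

lemma split_first {α} (a : α) {l : List α} (h : a ∈ l) :
    ∃ s t, l = s ++ a :: t ∧ a ∉ s := by
  classical
  induction l with
  | nil => simp at h
  | cons b u ih =>
      by_cases hb : a = b
      · exact ⟨[], u, by simp [hb], by simp⟩
      · obtain ⟨s, t, rfl, hns⟩ := ih (by simpa [hb] using h)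
        exact ⟨b :: s, t, by simp, by simp [hns, hb]⟩

lemma key_source {x : Q.V} {w : List Q.A} (hw : IsWalk Q x x w) {a0 : Q.A} (ha0 : a0 ∈ w)
    {r : Q.A} (hne : r ≠ a0) (hs : Q.s r = Q.s a0) :
    ∃ (u : Q.V) (w' : List Q.A), IsWalk Q u u w' ∧ w' ≠ [] ∧ r ∉ w' ∧
      ∃ a ∈ w', Q.s r = Q.s a := by
  obtain ⟨w1, w2, rfl⟩ := List.append_of_mem ha0
  obtain ⟨m, h1, h2⟩ := isWalk_split hw
  have hw' : IsWalk Q m m ((a0 :: w2) ++ w1) := isWalk_append h2 h1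
  by_cases hr : r ∈ (a0 :: w2) ++ w1
  · obtain ⟨v1, v2, hv, hnv⟩ := split_first r hr
    have hv' : a0 :: (w2 ++ w1) = v1 ++ r :: v2 := by simpa using hv
    cases v1 with
    | nil =>
        exfalso
        have h' : a0 :: (w2 ++ w1) = r :: v2 := by simpa using hv'
        injection h' with h1 _
        exact hne h1.symm
    | cons b v1' =>
        injection hv' with hb _
        obtain ⟨m', hm1, hm2⟩ := isWalk_split (l1 := b :: v1') (l2 := r :: v2)
          (by rw [hv] at hw'; exact hw')
        have hsm : Q.s r = m' := hm2.1
        have hsa : Q.s a0 = m := h2.1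
        have hmm : m' = m := by rw [← hsm, hs, hsa]
        rw [hmm] at hm1
        exact ⟨m, b :: v1', hm1, by simp, hnv, a0, by rw [hb]; exact List.mem_cons_self, hs⟩
  · exact ⟨m, (a0 :: w2) ++ w1, hw', by simp, hr, a0, by simp, hs⟩

/-- The opposite quiver. -/
def op (Q : Quiv) : Quiv := ⟨Q.V, Q.A, Q.t, Q.s⟩

lemma isWalk_op {i j : Q.V} {l : List Q.A} (h : IsWalk Q i j l) :
    IsWalk Q.op j i l.reverse := by
  induction l generalizing i with
  | nil => exact (show i = j from h).symm
  | cons a t ih =>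
      obtain ⟨hs, h'⟩ := h
      simp only [List.reverse_cons]
      exact isWalk_append (ih h') ⟨rfl, hs⟩

lemma key_sink {x : Q.V} {w : List Q.A} (hw : IsWalk Q x x w) {a0 : Q.A} (ha0 : a0 ∈ w)
    {r : Q.A} (hne : r ≠ a0) (hs : Q.t r = Q.t a0) :
    ∃ (u : Q.V) (w' : List Q.A), IsWalk Q u u w' ∧ w' ≠ [] ∧ r ∉ w' ∧
      ∃ a ∈ w', Q.t r = Q.t a := by
  obtain ⟨u, w', hw', hne', hr', a, ha, hta⟩ :=
    key_source (Q := Q.op) (isWalk_op hw) (List.mem_reverse.mpr ha0) hne hs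
  exact ⟨u, w'.reverse, isWalk_op (Q := Q.op) hw', fun h => hne' (List.reverse_eq_nil_iff.mp h),
    fun h => hr' (List.mem_reverse.mp h), a, List.mem_reverse.mpr ha, hta⟩

lemma arrowsOf_comp : ∀ {i j k : Q.V} (p : Quiver.Path i j) (q : Quiver.Path j k),
    arrowsOf (p.comp q) = arrowsOf p ++ arrowsOf q
  | _, _, _, p, Quiver.Path.nil => by simp [Quiver.Path.comp, arrowsOf]
  | _, _, _, p, Quiver.Path.cons q e => by
      simp [Quiver.Path.comp, arrowsOf, arrowsOf_comp p q]

lemma isWalk_cons' {i j : Q.V} {a : Q.A} {l : List Q.A} (h1 : Q.s a = i)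
    (h2 : IsWalk Q (Q.t a) j l) : IsWalk Q i j (a :: l) := by
  show Q.s a = i ∧ IsWalk Q (Q.t a) j l
  exact ⟨h1, h2⟩

lemma isWalk_nil' {i j : Q.V} (h : i = j) : IsWalk Q i j [] := by
  show i = j
  exact h

lemma isWalk_arrowsOf {i j : Q.V} (p : Quiver.Path i j) : IsWalk Q i j (arrowsOf p) := by
  induction p with
  | nil => simp only [arrowsOf]; exact isWalk_nil' rfl
  | cons p e ih =>
      simp only [arrowsOf]
      exact isWalk_append ih (isWalk_cons' e.2.1 (isWalk_nil' e.2.2))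

lemma length_arrowsOf : ∀ {i j : Q.V} (p : Quiver.Path i j),
    (arrowsOf p).length = p.length
  | _, _, Quiver.Path.nil => by simp [arrowsOf]
  | _, _, Quiver.Path.cons p e => by
      simp [arrowsOf, Quiver.Path.length, length_arrowsOf p]

lemma exists_path : ∀ (l : List Q.A) {i j : Q.V}, IsWalk Q i j l →
    ∃ p : Quiver.Path i j, arrowsOf p = l := by
  intro l
  induction l with
  | nil =>
      intro i j h
      have : i = j := h
      subst this
      exact ⟨Quiver.Path.nil, by simp [arrowsOf]⟩
  | cons a t ih =>
      intro i j h
      obtain ⟨hs, h'⟩ := h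
      obtain ⟨p, hp⟩ := ih h'
      refine ⟨(Quiver.Path.cons Quiver.Path.nil
        ((⟨a, hs, rfl⟩ : {b : Q.A // Q.s b = i ∧ Q.t b = Q.t a}) : i ⟶ Q.t a)).comp p, ?_⟩
      rw [arrowsOf_comp]
      simp [arrowsOf, hp]

/-- Walk formulation of `HasSourceCycle`. -/
lemma hasSourceCycle_iff_walk :
    Q.HasSourceCycle ↔ ∃ (x : Q.V) (w : List Q.A), IsWalk Q x x w ∧ w ≠ [] ∧
      ∃ p, p ∉ w ∧ ∃ a ∈ w, Q.s p = Q.s a := by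
  constructor
  · rintro ⟨⟨x, c, hc⟩, p, hp, a, ha, hs⟩
    exact ⟨x, arrowsOf c, isWalk_arrowsOf c,
      by rw [← List.length_pos_iff, length_arrowsOf]; exact hc, p, hp, a, ha, hs⟩
  · rintro ⟨x, w, hw, hne, p, hp, a, ha, hs⟩
    obtain ⟨c, hc⟩ := exists_path w hw
    refine ⟨⟨x, c, ?_⟩, p, by rw [hc]; exact hp, a, by rw [hc]; exact ha, hs⟩
    rw [← length_arrowsOf, hc, List.length_pos_iff]
    exact hne

/-- Walk formulation of `HasSinkCycle`. -/
lemma hasSinkCycle_iff_walk :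
    Q.HasSinkCycle ↔ ∃ (x : Q.V) (w : List Q.A), IsWalk Q x x w ∧ w ≠ [] ∧
      ∃ p, p ∉ w ∧ ∃ a ∈ w, Q.t p = Q.t a := by
  constructor
  · rintro ⟨⟨x, c, hc⟩, p, hp, a, ha, hs⟩
    exact ⟨x, arrowsOf c, isWalk_arrowsOf c,
      by rw [← List.length_pos_iff, length_arrowsOf]; exact hc, p, hp, a, ha, hs⟩
  · rintro ⟨x, w, hw, hne, p, hp, a, ha, hs⟩
    obtain ⟨c, hc⟩ := exists_path w hw
    refine ⟨⟨x, c, ?_⟩, p, by rw [hc]; exact hp, a, by rw [hc]; exact ha, hs⟩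
    rw [← length_arrowsOf, hc, List.length_pos_iff]
    exact hne

lemma isWalk_diag {i j : Q.V} {l : List Q.A} (h : IsWalk Q i j l) :
    IsWalk Q.kron (i, i) (j, j) (l.map fun a => (a, a)) := by
  induction l generalizing i with
  | nil => have : i = j := h; subst this; rfl
  | cons a t ih =>
      obtain ⟨hs, h'⟩ := h
      exact ⟨by simp [kron, hs], ih h'⟩

lemma isWalk_fst {i j : Q.kron.V} {l : List Q.kron.A} (h : IsWalk Q.kron i j l) :
    IsWalk Q i.1 j.1 (l.map Prod.fst) := by
  induction l generalizing i with
  | nil => exact congrArg Prod.fst (show i = j from h)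
  | cons a t ih =>
      obtain ⟨hs, h'⟩ := h
      exact ⟨congrArg Prod.fst hs, ih h'⟩

lemma isWalk_snd {i j : Q.kron.V} {l : List Q.kron.A} (h : IsWalk Q.kron i j l) :
    IsWalk Q i.2 j.2 (l.map Prod.snd) := by
  induction l generalizing i with
  | nil => exact congrArg Prod.snd (show i = j from h)
  | cons a t ih =>
      obtain ⟨hs, h'⟩ := h
      exact ⟨congrArg Prod.snd hs, ih h'⟩

end Quiv

/-- A finite quiver has a source (resp. sink) cycle iff its Kronecker square does. -/
theorem stmt7 (Q : Quiv) [Finite Q.V] [Finite Q.A] :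
    (Q.HasSourceCycle ↔ Q.kron.HasSourceCycle) ∧
    (Q.HasSinkCycle ↔ Q.kron.HasSinkCycle) := by
  rw [Quiv.hasSourceCycle_iff_walk, Quiv.hasSourceCycle_iff_walk (Q := Q.kron),
    Quiv.hasSinkCycle_iff_walk, Quiv.hasSinkCycle_iff_walk (Q := Q.kron)]
  constructor
  · constructor
    · rintro ⟨x, w, hw, hne, p, hp, a, ha, hs⟩
      have hdiag := Quiv.isWalk_diag hw
      have hpa : p ≠ a := fun h => hp (h ▸ ha)
      have ha' : (a, a) ∈ w.map (fun a => (a, a)) := List.mem_map_of_mem ha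
      have hne' : (p, a) ≠ (a, a) := fun h => hpa (congrArg Prod.fst h)
      have hs' : Q.kron.s (p, a) = Q.kron.s (a, a) := by
        simp only [Quiv.kron, hs]
      obtain ⟨u, w', hw', hwne, hr, b, hb, hsb⟩ :=
        Quiv.key_source hdiag ha' hne' hs'
      exact ⟨u, w', hw', hwne, (p, a), hr, b, hb, hsb⟩
    · rintro ⟨x, w, hw, hne, ⟨p, q⟩, hpq, ⟨a, b⟩, hab, hs⟩
      have hs1 : Q.s p = Q.s a := congrArg Prod.fst hs
      have hs2 : Q.s q = Q.s b := congrArg Prod.snd hs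
      by_cases hpa : p = a
      · have hqb : q ≠ b := fun h => hpq (by rw [hpa, h]; exact hab)
        obtain ⟨u, w', hw', hwne, hr, c, hc, hsc⟩ :=
          Quiv.key_source (Quiv.isWalk_snd hw) (List.mem_map_of_mem (f := Prod.snd) hab) hqb hs2
        exact ⟨u, w', hw', hwne, q, hr, c, hc, hsc⟩
      · obtain ⟨u, w', hw', hwne, hr, c, hc, hsc⟩ :=
          Quiv.key_source (Quiv.isWalk_fst hw) (List.mem_map_of_mem (f := Prod.fst) hab) hpa hs1
        exact ⟨u, w', hw', hwne, p, hr, c, hc, hsc⟩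
  · constructor
    · rintro ⟨x, w, hw, hne, p, hp, a, ha, hs⟩
      have hdiag := Quiv.isWalk_diag hw
      have hpa : p ≠ a := fun h => hp (h ▸ ha)
      have ha' : (a, a) ∈ w.map (fun a => (a, a)) := List.mem_map_of_mem ha
      have hne' : (p, a) ≠ (a, a) := fun h => hpa (congrArg Prod.fst h)
      have hs' : Q.kron.t (p, a) = Q.kron.t (a, a) := by
        simp only [Quiv.kron, hs]
      obtain ⟨u, w', hw', hwne, hr, b, hb, hsb⟩ :=
        Quiv.key_sink hdiag ha' hne' hs'
      exact ⟨u, w', hw', hwne, (p, a), hr, b, hb, hsb⟩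
    · rintro ⟨x, w, hw, hne, ⟨p, q⟩, hpq, ⟨a, b⟩, hab, hs⟩
      have hs1 : Q.t p = Q.t a := congrArg Prod.fst hs
      have hs2 : Q.t q = Q.t b := congrArg Prod.snd hs
      by_cases hpa : p = a
      · have hqb : q ≠ b := fun h => hpq (by rw [hpa, h]; exact hab)
        obtain ⟨u, w', hw', hwne, hr, c, hc, hsc⟩ :=
          Quiv.key_sink (Quiv.isWalk_snd hw) (List.mem_map_of_mem (f := Prod.snd) hab) hqb hs2
        exact ⟨u, w', hw', hwne, q, hr, c, hc, hsc⟩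
      · obtain ⟨u, w', hw', hwne, hr, c, hc, hsc⟩ :=
          Quiv.key_sink (Quiv.isWalk_fst hw) (List.mem_map_of_mem (f := Prod.fst) hab) hpa hs1
        exact ⟨u, w', hw', hwne, p, hr, c, hc, hsc⟩
end

section
/- A finite quiver Q is path reversible if and only if its Kronecker square Q̂ is path reversible. -/
def Quiv.PathReversible (Q : Quiv) : Prop :=
  ∀ i j : Q.V, Nonempty (Quiver.Path i j) → Nonempty (Quiver.Path j i)

/-!
Projecting a path of `Q̂` to either factor gives two paths of `Q` of the same length, and
conversely two paths of `Q` of the same length pair up to a path of `Q̂`; the diagonal embeds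
`Q` into `Q̂`, which gives the easy direction. For the other one, reverse a path `x ⟶ y` of
length `n ≥ 1` in `Q̂` componentwise into paths `y.1 ⟶ x.1`, `y.2 ⟶ x.2` of lengths `m₁, m₂`.
These lengths are equalised by winding around the cycles at `x.1` and `x.2` of lengths `n + m₁`
and `n + m₂`: `m₁ + (m₂ + n - 1)(n + m₁) = m₂ + (m₁ + n - 1)(n + m₂)`.
-/

open Quiver

theorem Prefunctor.mapPath_length {V W : Type*} [Quiver V] [Quiver W] (F : V ⥤q W) {a : V} :
    ∀ {b : V} (p : Path a b), (F.mapPath p).length = p.length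
  | _, .nil => rfl
  | _, .cons p _ => congrArg Nat.succ (F.mapPath_length p)

theorem Quiver.Path.exists_length_eq_add_mul {V : Type*} [Quiver V] {a b : V} (r : Path a b)
    (c : Path b b) : ∀ k : ℕ, ∃ q : Path a b, q.length = r.length + k * c.length
  | 0 => ⟨r, by simp⟩
  | k + 1 => by
    obtain ⟨q, hq⟩ := r.exists_length_eq_add_mul c k
    exact ⟨q.comp c, by simp only [Path.length_comp, hq]; ring⟩

namespace Quiv

variable {Q : Quiv}

def kronFst : Q.kron.V ⥤q Q.V where
  obj := Prod.fst
  map e := ⟨e.1.1, congrArg Prod.fst e.2.1, congrArg Prod.fst e.2.2⟩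

def kronSnd : Q.kron.V ⥤q Q.V where
  obj := Prod.snd
  map e := ⟨e.1.2, congrArg Prod.snd e.2.1, congrArg Prod.snd e.2.2⟩

def kronPath : ∀ {a c : Q.V} (p : Path a c) {b d : Q.V} (q : Path b d),
    p.length = q.length → @Path Q.kron.V Q.kron.toQuiver (a, b) (c, d)
  | _, _, .nil, _, _, .nil, _ => .nil
  | _, _, .cons p e, _, _, .cons q f, h =>
      (kronPath p q (Nat.succ.inj h)).cons ⟨(e.1, f.1), Prod.ext e.2.1 f.2.1, Prod.ext e.2.2 f.2.2⟩
  | _, _, .nil, _, _, .cons _ _, h => absurd h (Nat.succ_ne_zero _).symm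
  | _, _, .cons _ _, _, _, .nil, h => absurd h (Nat.succ_ne_zero _)

theorem pathReversible_of_kron (h : Q.kron.PathReversible) : Q.PathReversible := by
  rintro i j ⟨p⟩
  obtain ⟨P⟩ := h (i, i) (j, j) ⟨kronPath p p rfl⟩
  exact ⟨kronFst.mapPath P⟩

theorem PathReversible.kron (h : Q.PathReversible) : Q.kron.PathReversible := by
  rintro x y ⟨P⟩
  rcases hn : P.length with _ | k
  · exact ⟨Path.eq_of_length_zero P hn ▸ .nil⟩
  set p₁ := kronFst.mapPath P
  set p₂ := kronSnd.mapPath P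
  obtain ⟨r₁⟩ := h _ _ ⟨p₁⟩
  obtain ⟨r₂⟩ := h _ _ ⟨p₂⟩
  obtain ⟨q₁, hq₁⟩ := r₁.exists_length_eq_add_mul (p₁.comp r₁) (r₂.length + k)
  obtain ⟨q₂, hq₂⟩ := r₂.exists_length_eq_add_mul (p₂.comp r₂) (r₁.length + k)
  have hlen : q₁.length = q₂.length := by
    rw [hq₁, hq₂]
    simp only [Path.length_comp, p₁, p₂, Prefunctor.mapPath_length, hn]
    ring
  exact ⟨kronPath q₁ q₂ hlen⟩

end Quiv

theorem stmt12_general (Q : Quiv) :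
    Q.PathReversible ↔ Q.kron.PathReversible :=
  ⟨Quiv.PathReversible.kron, Quiv.pathReversible_of_kron⟩

/-- A finite quiver is path reversible iff its Kronecker square is path reversible. -/
theorem stmt12 (Q : Quiv) [Finite Q.V] [Finite Q.A] :
    Q.PathReversible ↔ Q.kron.PathReversible :=
  stmt12_general Q
end
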